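/- arXiv:1409.3080 — 4 statements merged into one kernel-verified Lean document; each statement's English description precedes it below -/
import Mathlib

section
/- For all positive integers n and q, with T := f(n,q), one has f(n+1,q) ≤ (T+1)(q^T + 1) − 1. That is, every q-ary word of length (f(n,q)+1)(q^{f(n,q)}+1) − 1 encounters Z_{n+1}. -/
/-- `W` is an instance of the pattern `V`: the image of `V` under a semigroup
homomorphism sending each letter to a nonempty word. -/
def IsInst {α β : Type} (V : List α) (W : List β) : Prop :=
  ∃ φ : α → List β, (∀ a ∈ V, φ a ≠ []) ∧ W = (V.map φ).flatten

/-- `U` encounters `V`: some contiguous subword (infix) of `U` is an instance of `V`. -/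
def Encounters {α β : Type} (U : List β) (V : List α) : Prop :=
  ∃ W : List β, W <:+: U ∧ IsInst V W

/-- `U` avoids `V`: `U` does not encounter `V`. -/
def Avoids {α β : Type} (U : List β) (V : List α) : Prop :=
  ¬ Encounters U V

/-- The Zimin words over the alphabet ℕ: `Z₀ = ε`, `Z_{n+1} = Zₙ · n · Zₙ`. -/
def Zimin : ℕ → List ℕ
  | 0 => []
  | n + 1 => Zimin n ++ n :: Zimin n

/-- `zimf n q` is the smallest `M` such that every `q`-ary word of length `M`
encounters the Zimin word `Zₙ`. -/
noncomputable def zimf (n q : ℕ) : ℕ :=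
  sInf {M : ℕ | ∀ W : List (Fin q), W.length = M → Encounters W (Zimin n)}

/-- `ZC n q M` is the set of `q`-ary words of length `M` that are instances of `Zₙ`. -/
def ZC (n q M : ℕ) : Set (List (Fin q)) :=
  {W | W.length = M ∧ IsInst (Zimin n) W}

lemma zimin_lt (n : ℕ) : ∀ a ∈ Zimin n, a < n := by
  induction n with
  | zero => simp [Zimin]
  | succ n ih =>
    intro a ha
    simp only [Zimin, List.mem_append, List.mem_cons] at ha
    rcases ha with h | h | h
    · exact Nat.lt_succ_of_lt (ih a h)
    · omega
    · exact Nat.lt_succ_of_lt (ih a h)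

lemma isInst_step {β : Type} {n : ℕ} {I M : List β} (hM : M ≠ [])
    (h : IsInst (Zimin n) I) : IsInst (Zimin (n + 1)) (I ++ M ++ I) := by
  obtain ⟨φ, hφ, hI⟩ := h
  refine ⟨fun a => if a = n then M else φ a, ?_, ?_⟩
  · intro a ha
    simp only [Zimin, List.mem_append, List.mem_cons] at ha
    by_cases hc : a = n
    · simpa [hc] using hM
    · simp only [if_neg hc]
      rcases ha with h1 | h1 | h1
      · exact hφ a h1
      · exact absurd h1 hc
      · exact hφ a h1
  · have hmap : (Zimin n).map (fun a => if a = n then M else φ a) = (Zimin n).map φ := by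
      apply List.map_congr_left
      intro a ha
      simp [Nat.ne_of_lt (zimin_lt n a ha)]
    simp only [Zimin, List.map_append, List.map_cons, List.flatten_append,
      List.flatten_cons, hmap, ← hI, List.append_assoc]
    simp

lemma take_at {β : Type} (W P I R : List β) (p : ℕ) (h : W.drop p = P ++ I ++ R) :
    (W.drop (p + P.length)).take I.length = I := by
  rw [← List.drop_drop, h, List.append_assoc, List.drop_left, List.take_left]

lemma sandwich {β : Type} (W I : List β) (s e : ℕ) (hse : s + I.length < e)
    (he : e + I.length ≤ W.length)
    (h1 : (W.drop s).take I.length = I) (h2 : (W.drop e).take I.length = I) :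
    ∃ M : List β, M ≠ [] ∧ (W.drop s).take (e - s + I.length) = I ++ M ++ I := by
  refine ⟨(W.drop (s + I.length)).take (e - s - I.length), ?_, ?_⟩
  · have hlen : ((W.drop (s + I.length)).take (e - s - I.length)).length
        = e - s - I.length := by
      simp only [List.length_take, List.length_drop]
      omega
    intro hnil
    rw [hnil] at hlen
    simp at hlen
    omega
  · have e1 : e - s + I.length = I.length + (e - s - I.length) + I.length := by omega
    rw [e1, List.take_add, List.take_add, h1, List.drop_drop, List.drop_drop]
    have e2 : s + (I.length + (e - s - I.length)) = e := by omega
    rw [e2, h2, List.append_assoc]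

lemma key {q : ℕ} (n T : ℕ)
    (hT : ∀ W : List (Fin q), W.length = T → Encounters W (Zimin n)) :
    ∀ W : List (Fin q), W.length = (T + 1) * (q ^ T + 1) - 1 →
      Encounters W (Zimin (n + 1)) := by
  intro W hW
  have hLen : W.length = q ^ T * (T + 1) + T := by rw [hW]; ring_nf; omega
  -- blocks
  have hblock : ∀ i : ℕ, i ≤ q ^ T →
      ((W.drop (i * (T + 1))).take T).length = T := by
    intro i hi
    have : i * (T + 1) ≤ q ^ T * (T + 1) := Nat.mul_le_mul_right _ hi
    simp only [List.length_take, List.length_drop, hLen]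
    omega
  set f : Fin (q ^ T + 1) → List.Vector (Fin q) T :=
    fun i => ⟨(W.drop ((i : ℕ) * (T + 1))).take T,
      hblock i (Nat.lt_succ_iff.mp i.isLt)⟩ with hf
  have hcard : Fintype.card (List.Vector (Fin q) T) < Fintype.card (Fin (q ^ T + 1)) := by
    simp [card_vector]
  obtain ⟨i, j, hij, hfe⟩ := Fintype.exists_ne_map_eq_of_card_lt f hcard
  suffices h : ∀ i j : Fin (q ^ T + 1), (i : ℕ) < (j : ℕ) → f i = f j →
      Encounters W (Zimin (n + 1)) by
    rcases Nat.lt_or_ge (i : ℕ) (j : ℕ) with h' | h'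
    · exact h i j h' hfe
    · have : (j : ℕ) < (i : ℕ) := by
        rcases Nat.lt_or_ge (j : ℕ) (i : ℕ) with h'' | h''
        · exact h''
        · exact absurd (Fin.ext (by omega)) hij
      exact h j i this hfe.symm
  clear hij hfe i j
  intro i j hij hfe
  have hi : (i : ℕ) ≤ q ^ T := Nat.lt_succ_iff.mp i.isLt
  have hj : (j : ℕ) ≤ q ^ T := Nat.lt_succ_iff.mp j.isLt
  set B : List (Fin q) := (W.drop ((i : ℕ) * (T + 1))).take T with hBdef
  have hBj : (W.drop ((j : ℕ) * (T + 1))).take T = B := by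
    have := congrArg Subtype.val hfe
    exact this.symm
  have hBlen : B.length = T := hblock i hi
  obtain ⟨I, ⟨P, A, hPA⟩, hinst⟩ := hT B hBlen
  -- lengths
  have hPIA : P.length + I.length + A.length = T := by
    have := congrArg List.length hPA
    simp [hBlen] at this
    omega
  -- positions
  have hdropi : W.drop ((i : ℕ) * (T + 1)) = P ++ I ++ (A ++ W.drop ((i : ℕ) * (T + 1) + T)) := by
    conv_lhs => rw [← List.take_append_drop T (W.drop ((i : ℕ) * (T + 1)))]
    rw [List.drop_drop, ← hBdef, ← hPA]
    simp [List.append_assoc]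
  have hdropj : W.drop ((j : ℕ) * (T + 1)) = P ++ I ++ (A ++ W.drop ((j : ℕ) * (T + 1) + T)) := by
    conv_lhs => rw [← List.take_append_drop T (W.drop ((j : ℕ) * (T + 1)))]
    rw [List.drop_drop, hBj, ← hPA]
    simp [List.append_assoc]
  set s := (i : ℕ) * (T + 1) + P.length with hs
  set e := (j : ℕ) * (T + 1) + P.length with he
  have h1 : (W.drop s).take I.length = I := take_at W P I _ _ hdropi
  have h2 : (W.drop e).take I.length = I := take_at W P I _ _ hdropj
  have hij1 : (i : ℕ) * (T + 1) + (T + 1) ≤ (j : ℕ) * (T + 1) := by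
    calc (i : ℕ) * (T + 1) + (T + 1) = ((i : ℕ) + 1) * (T + 1) := by ring
    _ ≤ (j : ℕ) * (T + 1) := Nat.mul_le_mul_right _ hij
  have hse : s + I.length < e := by omega
  have hee : e + I.length ≤ W.length := by
    have : (j : ℕ) * (T + 1) ≤ q ^ T * (T + 1) := Nat.mul_le_mul_right _ hj
    omega
  obtain ⟨M, hMne, hJ⟩ := sandwich W I s e hse hee h1 h2
  refine ⟨(W.drop s).take (e - s + I.length), ?_, ?_⟩
  · exact ⟨W.take s, (W.drop s).drop (e - s + I.length), by
      rw [List.append_assoc, List.take_append_drop, List.take_append_drop]⟩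
  · rw [hJ]
    exact isInst_step hMne hinst

lemma exists_bound (q n : ℕ) :
    ∃ M, ∀ W : List (Fin q), W.length = M → Encounters W (Zimin n) := by
  induction n with
  | zero =>
    exact ⟨0, fun W _ => ⟨[], ⟨[], W, by simp⟩, fun _ => [], by simp [Zimin], by simp [Zimin]⟩⟩
  | succ n ih =>
    obtain ⟨M, hM⟩ := ih
    exact ⟨_, key n M hM⟩

/-- For positive `n` and `q`, with `T := f(n,q)`, every `q`-ary word of length
`(T+1)(q^T+1) − 1` encounters `Z_{n+1}`; hence `f(n+1,q) ≤ (T+1)(q^T+1) − 1`. -/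
theorem zimf_succ_le (n q : ℕ) (hn : 0 < n) (hq : 0 < q) :
    (∀ W : List (Fin q), W.length = (zimf n q + 1) * (q ^ zimf n q + 1) - 1 →
      Encounters W (Zimin (n + 1))) ∧
    zimf (n + 1) q ≤ (zimf n q + 1) * (q ^ zimf n q + 1) - 1 := by
  have hne : {M : ℕ | ∀ W : List (Fin q), W.length = M → Encounters W (Zimin n)}.Nonempty :=
    exists_bound q n
  have hT : ∀ W : List (Fin q), W.length = zimf n q → Encounters W (Zimin n) :=
    Nat.sInf_mem hne
  have h1 := key n (zimf n q) hT
  exact ⟨h1, Nat.sInf_le h1⟩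
end

section
/- For all positive integers n, M, and q ≥ 1, the probability that a uniformly random q-ary word of length M is an instance of Zₙ is nondecreasing in M: |C(n,q,M+1)|/q^{M+1} ≥ |C(n,q,M)|/q^{M}. -/
/-!
For `n ≥ 1` a word is an instance of `Zₙ` iff it has the form `P x P` with `P` an instance
of `Zₙ₋₁` and `x` nonempty. Inserting an arbitrary letter right after the shortest such `P`
yields an instance of `Zₙ` that is one letter longer and has the same shortest `P`, so the
insertion position, and with it the letter and the original word, can be read off the result.
This injection `C(n,q,M) × [q] → C(n,q,M+1)` gives `q · |C(n,q,M)| ≤ |C(n,q,M+1)|`.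
-/

variable {β : Type}

lemma lt_of_mem_zimin {n a : ℕ} (h : a ∈ Zimin n) : a < n := by
  induction n with
  | zero => simp [Zimin] at h
  | succ n ih =>
    simp only [Zimin, List.mem_append, List.mem_cons] at h
    rcases h with h | rfl | h <;> grind

lemma isInst_zimin_succ_iff {n : ℕ} {W : List β} :
    IsInst (Zimin (n + 1)) W ↔
      ∃ P x : List β, IsInst (Zimin n) P ∧ x ≠ [] ∧ W = P ++ x ++ P := by
  constructor
  · rintro ⟨φ, hφ, rfl⟩
    exact ⟨((Zimin n).map φ).flatten, φ n, ⟨φ, fun a ha => hφ a (by simp [Zimin, ha]), rfl⟩,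
      hφ n (by simp [Zimin]), by simp [Zimin]⟩
  · rintro ⟨P, x, ⟨ψ, hψ, rfl⟩, hx, rfl⟩
    -- `n` does not occur in `Zₙ`, so `ψ` may be redefined there freely.
    have hmap : (Zimin n).map (Function.update ψ n x) = (Zimin n).map ψ :=
      List.map_congr_left fun a ha => Function.update_of_ne (lt_of_mem_zimin ha).ne _ _
    refine ⟨Function.update ψ n x, fun a ha => ?_, by simp [Zimin, hmap]⟩
    rcases eq_or_ne a n with rfl | hne
    · simpa using hx
    · simp only [Zimin, List.mem_append, List.mem_cons, hne, false_or, or_self] at ha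
      simpa [hne] using hψ a ha

/-- `W = P x P` with `|P| = ℓ`, `x` nonempty and `P` an instance of `Zₙ`. -/
def IsZiminBorder (n : ℕ) (W : List β) (ℓ : ℕ) : Prop :=
  2 * ℓ < W.length ∧ W.drop (W.length - ℓ) = W.take ℓ ∧ IsInst (Zimin n) (W.take ℓ)

lemma IsZiminBorder.exists_drop_eq {n ℓ : ℕ} {W : List β} (h : IsZiminBorder n W ℓ) :
    ∃ x : List β, x ≠ [] ∧ W.drop ℓ = x ++ W.take ℓ := by
  obtain ⟨hlen, hdrop, -⟩ := h
  refine ⟨(W.drop ℓ).take (W.length - 2 * ℓ), ?_, ?_⟩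
  · rw [← List.length_pos_iff, List.length_take, List.length_drop]
    omega
  · rw [← hdrop, show W.length - ℓ = ℓ + (W.length - 2 * ℓ) by omega, ← List.drop_drop,
      List.take_append_drop]

lemma isInst_zimin_succ_iff_exists_isZiminBorder {n : ℕ} {W : List β} :
    IsInst (Zimin (n + 1)) W ↔ ∃ ℓ, IsZiminBorder n W ℓ := by
  rw [isInst_zimin_succ_iff]
  constructor
  · rintro ⟨P, x, hP, hx, rfl⟩
    have hx : 0 < x.length := List.length_pos_iff.mpr hx
    have htake : (P ++ x ++ P).take P.length = P := by
      rw [List.append_assoc, List.take_left]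
    refine ⟨P.length, by simp only [List.length_append]; omega, ?_, by rwa [htake]⟩
    rw [htake, show (P ++ x ++ P).length - P.length = (P ++ x).length by
      rw [List.length_append]; omega, List.drop_left]
  · rintro ⟨ℓ, h⟩
    obtain ⟨x, hx, hdrop⟩ := h.exists_drop_eq
    exact ⟨W.take ℓ, x, h.2.2, hx, by rw [List.append_assoc, ← hdrop, List.take_append_drop]⟩

lemma take_insert_of_le {W : List β} {k ℓ : ℕ} (a : β) (hk : k ≤ ℓ) (hℓ : ℓ ≤ W.length) :
    (W.take ℓ ++ a :: W.drop ℓ).take k = W.take k := by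
  rw [List.take_append, List.length_take, show k - min ℓ W.length = 0 by omega, List.take_zero,
    List.append_nil, List.take_take, min_eq_left hk]

lemma drop_insert_of_add_le {W : List β} {k ℓ : ℕ} (a : β) (h : k + ℓ ≤ W.length) :
    (W.take ℓ ++ a :: W.drop ℓ).drop (W.length + 1 - k) = W.drop (W.length - k) := by
  rw [List.drop_append, List.length_take, min_eq_left (by omega),
    List.drop_eq_nil_of_le (by rw [List.length_take]; omega), List.nil_append,
    show W.length + 1 - k - ℓ = (W.length - k - ℓ) + 1 by omega, List.drop_succ_cons,
    List.drop_drop, show ℓ + (W.length - k - ℓ) = W.length - k by omega]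

lemma isZiminBorder_insert_iff {n k ℓ : ℕ} {W : List β} (a : β) (hℓ : 2 * ℓ < W.length)
    (hk : k ≤ ℓ) :
    IsZiminBorder n (W.take ℓ ++ a :: W.drop ℓ) k ↔ IsZiminBorder n W k := by
  have hlen : (W.take ℓ ++ a :: W.drop ℓ).length = W.length + 1 := by
    simp only [List.length_append, List.length_take, List.length_cons, List.length_drop]
    omega
  have htake := take_insert_of_le (W := W) a hk (by omega)
  have hdrop := drop_insert_of_add_le (W := W) a (show k + ℓ ≤ W.length by omega)
  simp only [IsZiminBorder, hlen, htake, hdrop]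
  exact and_congr_left fun _ => iff_of_true (by omega) (by omega)

noncomputable def minZiminBorder (n : ℕ) (W : List β) : ℕ :=
  sInf {ℓ | IsZiminBorder n W ℓ}

lemma isZiminBorder_minZiminBorder {n : ℕ} {W : List β} (hW : IsInst (Zimin (n + 1)) W) :
    IsZiminBorder n W (minZiminBorder n W) :=
  Nat.sInf_mem (isInst_zimin_succ_iff_exists_isZiminBorder.mp hW)

noncomputable def ziminInsert (n : ℕ) (W : List β) (a : β) : List β :=
  W.take (minZiminBorder n W) ++ a :: W.drop (minZiminBorder n W)

lemma length_ziminInsert {n : ℕ} {W : List β} (hW : IsInst (Zimin (n + 1)) W) (a : β) :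
    (ziminInsert n W a).length = W.length + 1 := by
  have := (isZiminBorder_minZiminBorder hW).1
  simp only [ziminInsert, List.length_append, List.length_take, List.length_cons,
    List.length_drop]
  omega

lemma isInst_ziminInsert {n : ℕ} {W : List β} (hW : IsInst (Zimin (n + 1)) W) (a : β) :
    IsInst (Zimin (n + 1)) (ziminInsert n W a) := by
  have hb := isZiminBorder_minZiminBorder hW
  obtain ⟨x, -, hdrop⟩ := hb.exists_drop_eq
  rw [isInst_zimin_succ_iff]
  exact ⟨_, a :: x, hb.2.2, List.cons_ne_nil a x, by simp [ziminInsert, hdrop]⟩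

lemma minZiminBorder_ziminInsert {n : ℕ} {W : List β} (hW : IsInst (Zimin (n + 1)) W) (a : β) :
    minZiminBorder n (ziminInsert n W a) = minZiminBorder n W := by
  have hb := isZiminBorder_minZiminBorder hW
  refine le_antisymm (Nat.sInf_le ((isZiminBorder_insert_iff a hb.1 le_rfl).mpr hb)) ?_
  refine le_csInf ⟨_, (isZiminBorder_insert_iff a hb.1 le_rfl).mpr hb⟩ fun k hk => ?_
  by_contra! hlt
  exact hlt.not_ge (Nat.sInf_le ((isZiminBorder_insert_iff a hb.1 hlt.le).mp hk))

lemma ziminInsert_injOn (n : ℕ) :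
    Set.InjOn (fun p : List β × β => ziminInsert n p.1 p.2)
      ({W | IsInst (Zimin (n + 1)) W} ×ˢ Set.univ) := by
  rintro ⟨W, a⟩ ⟨hW, -⟩ ⟨V, b⟩ ⟨hV, -⟩ heq
  have hm : minZiminBorder n W = minZiminBorder n V := by
    rw [← minZiminBorder_ziminInsert hW a, ← minZiminBorder_ziminInsert hV b]
    exact congrArg _ heq
  have hlen : ∀ {U : List β}, IsInst (Zimin (n + 1)) U →
      (U.take (minZiminBorder n U)).length = minZiminBorder n U := fun hU =>
    List.length_take_of_le (by have := (isZiminBorder_minZiminBorder hU).1; omega)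
  simp only [ziminInsert] at heq
  obtain ⟨htake, hcons⟩ := List.append_inj heq (by rw [hlen hW, hlen hV, hm])
  obtain ⟨rfl, hdrop⟩ := List.cons_eq_cons.mp hcons
  rw [← List.take_append_drop (minZiminBorder n W) W, htake, hdrop, List.take_append_drop]

lemma ncard_ZC_succ_mul_le (n q M : ℕ) :
    (ZC (n + 1) q M).ncard * q ≤ (ZC (n + 1) q (M + 1)).ncard := by
  have hfin : (ZC (n + 1) q (M + 1)).Finite :=
    (List.finite_length_eq (Fin q) (M + 1)).subset fun W hW => hW.1
  calc (ZC (n + 1) q M).ncard * q = (ZC (n + 1) q M ×ˢ (Set.univ : Set (Fin q))).ncard := by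
        simp [Set.ncard_prod]
    _ ≤ (ZC (n + 1) q (M + 1)).ncard := by
      refine Set.ncard_le_ncard_of_injOn (fun p => ziminInsert n p.1 p.2) ?_ ?_ hfin
      · rintro ⟨W, a⟩ ⟨⟨rfl, hW⟩, -⟩
        exact ⟨length_ziminInsert hW a, isInst_ziminInsert hW a⟩
      · exact (ziminInsert_injOn n).mono (Set.prod_mono (fun W hW => hW.2) subset_rfl)

theorem ZC_prob_monotone_general (n M q : ℕ) (hn : 0 < n) (hq : 1 ≤ q) :
    ((ZC n q M).ncard : ℚ) / (q : ℚ) ^ M ≤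
      ((ZC n q (M + 1)).ncard : ℚ) / (q : ℚ) ^ (M + 1) := by
  obtain ⟨n, rfl⟩ := Nat.exists_eq_add_one_of_ne_zero hn.ne'
  have hcard : ((ZC (n + 1) q M).ncard : ℚ) * q ≤ (ZC (n + 1) q (M + 1)).ncard := by
    exact_mod_cast ncard_ZC_succ_mul_le n q M
  have hq₀ : (0 : ℚ) < q := by exact_mod_cast hq
  rw [div_le_div_iff₀ (pow_pos hq₀ _) (pow_pos hq₀ _), pow_succ', ← mul_assoc]
  exact mul_le_mul_of_nonneg_right hcard (pow_nonneg hq₀.le _)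

/-- Monotonicity: for all positive `n`, `M` and `q ≥ 1`, the probability that a
uniformly random `q`-ary word of length `M` is an instance of `Zₙ` is nondecreasing
in `M`: `|C(n,q,M+1)|/q^{M+1} ≥ |C(n,q,M)|/q^M`. -/
theorem ZC_prob_monotone (n M q : ℕ) (hn : 0 < n) (hM : 0 < M) (hq : 1 ≤ q) :
    ((ZC n q M).ncard : ℚ) / (q : ℚ) ^ M ≤
      ((ZC n q (M + 1)).ncard : ℚ) / (q : ℚ) ^ (M + 1) :=
  ZC_prob_monotone_general n M q hn hq
end

section
/- For all positive integers n and M and every integer q ≥ 2, |C(n+1,q,M)| ≤ Σ_{j = 2ⁿ−1}^{⌊(M−1)/2⌋} |C(n,q,j)| · q^{M−2j}. (Every Z_{n+1}-instance of length M can be written UVU where U is a Zₙ-instance of length j with 2ⁿ−1 ≤ j < M/2 and V is an arbitrary nonempty word of length M−2j.) -/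
lemma zimin_length (n : ℕ) : (Zimin n).length = 2 ^ n - 1 := by
  induction n with
  | zero => simp [Zimin]
  | succ n ih =>
    have h1 : 1 ≤ 2 ^ n := Nat.one_le_two_pow
    simp [Zimin, ih, pow_succ]
    omega

lemma flatten_len_ge {α β : Type} (V : List α) (φ : α → List β)
    (h : ∀ a ∈ V, φ a ≠ []) : V.length ≤ ((V.map φ).flatten).length := by
  induction V with
  | nil => simp
  | cons a t ih =>
    simp only [List.map_cons, List.flatten_cons, List.length_append, List.length_cons]
    have h1 : 1 ≤ (φ a).length := by
      have := h a (by simp)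
      exact Nat.one_le_iff_ne_zero.2 (by simpa using this)
    have h2 := ih (fun b hb => h b (by simp [hb]))
    omega

lemma inst_len_ge {β : Type} {n : ℕ} {U : List β} (h : IsInst (Zimin n) U) :
    2 ^ n - 1 ≤ U.length := by
  obtain ⟨φ, hφ, rfl⟩ := h
  calc 2 ^ n - 1 = (Zimin n).length := (zimin_length n).symm
    _ ≤ _ := flatten_len_ge _ _ hφ

lemma inst_succ {β : Type} {n : ℕ} {W : List β} (h : IsInst (Zimin (n + 1)) W) :
    ∃ U V, IsInst (Zimin n) U ∧ V ≠ [] ∧ W = U ++ V ++ U := by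
  obtain ⟨φ, hφ, rfl⟩ := h
  refine ⟨((Zimin n).map φ).flatten, φ n,
    ⟨φ, fun a ha => hφ a (by simp [Zimin, ha]), rfl⟩,
    hφ n (by simp [Zimin]), ?_⟩
  simp [Zimin]

lemma ncard_biUnion_le {α ι : Type*} (s : Finset ι) (f : ι → Set α) :
    (⋃ i ∈ s, f i).ncard ≤ ∑ i ∈ s, (f i).ncard := by
  classical
  induction s using Finset.induction with
  | empty => simp
  | @insert a s hx ih =>
    rw [Finset.set_biUnion_insert, Finset.sum_insert hx]
    exact le_trans (Set.ncard_union_le _ _) (by omega)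

lemma ncard_prod' {α β : Type*} (A : Set α) (B : Set β) :
    (A ×ˢ B).ncard = A.ncard * B.ncard := by
  rw [← Nat.card_coe_set_eq, ← Nat.card_coe_set_eq, ← Nat.card_coe_set_eq,
    ← Nat.card_prod]
  exact Nat.card_congr (Equiv.Set.prod A B)

lemma ncard_len_eq (q k : ℕ) : {V : List (Fin q) | V.length = k}.ncard = q ^ k := by
  rw [← Nat.card_coe_set_eq]
  have : Nat.card ↥{V : List (Fin q) | V.length = k} = Nat.card (List.Vector (Fin q) k) :=
    Nat.card_congr (Equiv.subtypeEquivRight (fun _ => Iff.rfl))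
  rw [this, Nat.card_eq_fintype_card, card_vector, Fintype.card_fin]

/-- For all positive `n`, `M` and `q ≥ 2`:
`|C(n+1,q,M)| ≤ Σ_{j = 2ⁿ−1}^{⌊(M−1)/2⌋} |C(n,q,j)| · q^{M−2j}`. -/
theorem ZC_card_succ_upper (n M q : ℕ) (hn : 0 < n) (hM : 0 < M) (hq : 2 ≤ q) :
    (ZC (n + 1) q M).ncard ≤
      ∑ j ∈ Finset.Icc (2 ^ n - 1) ((M - 1) / 2), (ZC n q j).ncard * q ^ (M - 2 * j) := by
  classical
  set s := Finset.Icc (2 ^ n - 1) ((M - 1) / 2) with hs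
  set S : ℕ → Set (List (Fin q)) := fun j =>
    (fun p : List (Fin q) × List (Fin q) => p.1 ++ p.2 ++ p.1) ''
      ((ZC n q j) ×ˢ {V : List (Fin q) | V.length = M - 2 * j}) with hS
  have hsub : ZC (n + 1) q M ⊆ ⋃ j ∈ s, S j := by
    rintro W ⟨hlen, hinst⟩
    obtain ⟨U, V, hU, hV, rfl⟩ := inst_succ hinst
    have hUlen : 2 ^ n - 1 ≤ U.length := inst_len_ge hU
    have hVpos : 1 ≤ V.length := List.length_pos_iff.2 hV
    have hM' : U.length + V.length + U.length = M := by
      simp only [List.length_append] at hlen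
      omega
    have hj : U.length ∈ s := by
      rw [hs, Finset.mem_Icc]
      constructor
      · exact hUlen
      · rw [Nat.le_div_iff_mul_le (by norm_num)]
        omega
    refine Set.mem_biUnion hj ?_
    exact ⟨(U, V), ⟨⟨rfl, hU⟩, by simp; omega⟩, rfl⟩
  have hfin : ∀ j, (S j).Finite := by
    intro j
    apply Set.Finite.image
    apply Set.Finite.prod
    · exact (List.finite_length_eq (Fin q) j).subset (fun W hW => hW.1)
    · exact List.finite_length_eq (Fin q) (M - 2 * j)
  calc (ZC (n + 1) q M).ncard ≤ (⋃ j ∈ s, S j).ncard := by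
        exact Set.ncard_le_ncard hsub
          (Set.Finite.biUnion s.finite_toSet (fun j _ => hfin j))
    _ ≤ ∑ j ∈ s, (S j).ncard := ncard_biUnion_le s S
    _ ≤ ∑ j ∈ s, (ZC n q j).ncard * q ^ (M - 2 * j) := by
        apply Finset.sum_le_sum
        intro j _
        have h1 : (S j).ncard ≤ ((ZC n q j) ×ˢ {V : List (Fin q) | V.length = M - 2 * j}).ncard := by
          apply Set.ncard_image_le
          apply Set.Finite.prod
          · exact (List.finite_length_eq (Fin q) j).subset (fun W hW => hW.1)
          · exact List.finite_length_eq (Fin q) (M - 2 * j)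
        refine h1.trans ?_
        rw [ncard_prod', ncard_len_eq]
end

section
/- Fix integers n ≥ 1, q ≥ 2, M ≥ 1. The total number, over all q-ary words W of length M, of pairs (i,j) with 0 ≤ i < j ≤ M such that the contiguous subword of W from position i to position j is an instance of Zₙ, is at most q^M · C(M+1, 2) · (q/(q−1))^{n−1} · q^{−2ⁿ+n+1}, where C(M+1,2) = (M+1)M/2 is a binomial coefficient. (Equivalently, the expected number of Zₙ-instance subword occurrences in a uniformly random q-ary word of length M is at most C(M+1,2)·(q/(q−1))^{n−1}·q^{−2ⁿ+n+1}.) -/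
/-!
An instance of `Z_{n+1}` of length `L` has the form `P B P` with `P` an instance of `Zₙ`, so
`|P| ≥ |Zₙ| = 2ⁿ - 1`, and `B` nonempty. Hence the number `c_{n+1}(L)` of such `q`-ary words is at
most `∑_{2ⁿ-1 ≤ p, 2p < L} c_n(p) q^{L-2p}`, and by induction
`c_n(L) ≤ q^L (q/(q-1))^{n-1} q^{-2ⁿ+n+1}`: each step costs the geometric tail
`∑_{p ≥ 2ⁿ-1} q^{-p} ≤ q^{-(2ⁿ-1)} · q/(q-1)`. An occurrence in a word of length `M` is determined
by its window `[i, j)`, one of `C(M+1, 2)`, the `Zₙ`-instance filling the window and the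
`M - (j - i)` letters outside it.
-/

open Finset

theorem List.ncard_length_eq (α : Type*) [Fintype α] (L : ℕ) :
    {W : List α | W.length = L}.ncard = Fintype.card α ^ L := by
  rw [← Nat.card_coe_set_eq, ← card_vector L]
  exact Nat.card_eq_fintype_card (α := List.Vector α L)

theorem ncard_biUnion_image_le {ι α β : Type*} (t : Finset ι) (s : ι → Set α) (f : ι → α → β)
    (hs : ∀ i ∈ t, (s i).Finite) :
    (⋃ i ∈ t, f i '' s i).ncard ≤ ∑ i ∈ t, (s i).ncard :=
  (Finset.set_ncard_biUnion_le t _).trans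
    (sum_le_sum fun i hi => Set.ncard_image_le (hs i hi))

theorem finite_biUnion_image {ι α β : Type*} (t : Finset ι) (s : ι → Set α) (f : ι → α → β)
    (hs : ∀ i ∈ t, (s i).Finite) : (⋃ i ∈ t, f i '' s i).Finite :=
  t.finite_toSet.biUnion fun i hi => (hs i hi).image _

theorem List.eq_take_append_infix_append_drop {α : Type*} (W : List α) {i j : ℕ} (hij : i ≤ j) :
    W = W.take i ++ (W.drop i).take (j - i) ++ W.drop j := by
  conv_lhs => rw [← List.take_append_drop i W, ← List.take_append_drop (j - i) (W.drop i)]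
  rw [List.drop_drop, Nat.add_sub_cancel' hij, List.append_assoc]

theorem ncard_infix_occurrences_le {α : Type*} [Fintype α] (P : List α → Prop) (M : ℕ) :
    {p : List α × ℕ × ℕ | p.1.length = M ∧ p.2.1 < p.2.2 ∧ p.2.2 ≤ M ∧
        P ((p.1.drop p.2.1).take (p.2.2 - p.2.1))}.ncard ≤
      ∑ j ∈ range (M + 1), ∑ i ∈ range j,
        Fintype.card α ^ i * {V | V.length = j - i ∧ P V}.ncard * Fintype.card α ^ (M - j) := by
  set pieces : (Σ _ : ℕ, ℕ) → Set ((List α × List α) × List α) := fun x =>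
    ({A | A.length = x.2} ×ˢ {V | V.length = x.1 - x.2 ∧ P V}) ×ˢ {B | B.length = M - x.1}
  have hfin : ∀ x ∈ (range (M + 1)).sigma range, (pieces x).Finite := fun x _ =>
    ((List.finite_length_eq α _).prod ((List.finite_length_eq α _).subset fun _ hV => hV.1)).prod
      (List.finite_length_eq α _)
  have hsub : {p : List α × ℕ × ℕ | p.1.length = M ∧ p.2.1 < p.2.2 ∧ p.2.2 ≤ M ∧
      P ((p.1.drop p.2.1).take (p.2.2 - p.2.1))} ⊆
      ⋃ x ∈ (range (M + 1)).sigma range,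
        (fun t => (t.1.1 ++ t.1.2 ++ t.2, x.2, x.1)) '' pieces x := by
    rintro ⟨W, i, j⟩ ⟨hW, hij, hjM, hP⟩
    dsimp only at hW hij hjM hP
    simp only [Set.mem_iUnion, Set.mem_image, mem_sigma, mem_range, Prod.exists, Sigma.exists]
    refine ⟨j, i, ⟨by omega, hij⟩, W.take i, (W.drop i).take (j - i), W.drop j, ?_, ?_⟩
    · simp only [pieces, Set.mem_prod, Set.mem_ofPred_eq, List.length_take, List.length_drop, hW]
      exact ⟨⟨by omega, by omega, hP⟩, trivial⟩
    · rw [← W.eq_take_append_infix_append_drop hij.le]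
  calc _ ≤ (⋃ x ∈ (range (M + 1)).sigma range,
        (fun t => (t.1.1 ++ t.1.2 ++ t.2, x.2, x.1)) '' pieces x).ncard :=
        Set.ncard_le_ncard hsub (finite_biUnion_image _ _ _ hfin)
    _ ≤ ∑ x ∈ (range (M + 1)).sigma range, (pieces x).ncard := ncard_biUnion_image_le _ _ _ hfin
    _ = _ := by
        rw [sum_sigma]
        simp only [pieces, Set.ncard_prod, List.ncard_length_eq]

theorem IsInst.length_le {α β : Type} {V : List α} {W : List β} (h : IsInst V W) :
    V.length ≤ W.length := by
  obtain ⟨φ, hφ, rfl⟩ := h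
  induction V with
  | nil => simp
  | cons a V ih =>
    have ha : 1 ≤ (φ a).length := List.length_pos_iff.mpr (hφ a List.mem_cons_self)
    have hV := ih fun b hb => hφ b (List.mem_cons_of_mem a hb)
    simp only [List.map_cons, List.flatten_cons, List.length_append, List.length_cons]
    omega

theorem IsInst.exists_eq_append_append {α β : Type} {V : List α} {a : α} {W : List β}
    (h : IsInst (V ++ a :: V) W) : ∃ P B, IsInst V P ∧ B ≠ [] ∧ W = P ++ B ++ P := by
  obtain ⟨φ, hφ, rfl⟩ := h
  exact ⟨(V.map φ).flatten, φ a, ⟨φ, fun b hb => hφ b (by simp [hb]), rfl⟩,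
    hφ a (by simp), by simp⟩

theorem length_zimin_add_one (n : ℕ) : (Zimin n).length + 1 = 2 ^ n := by
  induction n with
  | zero => rfl
  | succ n ih => simp only [Zimin, List.length_append, List.length_cons, pow_succ]; omega

theorem ZC_finite (n q L : ℕ) : (ZC n q L).Finite :=
  (List.finite_length_eq (Fin q) L).subset fun _ hW => hW.1

theorem ncard_ZC_le_pow (n q L : ℕ) : (ZC n q L).ncard ≤ q ^ L := by
  calc (ZC n q L).ncard ≤ {W : List (Fin q) | W.length = L}.ncard :=
        Set.ncard_le_ncard (fun _ hW => hW.1) (List.finite_length_eq _ L)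
    _ = q ^ L := by rw [List.ncard_length_eq, Fintype.card_fin]

theorem ZC_succ_subset (n q L : ℕ) :
    ZC (n + 1) q L ⊆ ⋃ p ∈ (Ico (2 ^ n - 1) L).filter (fun p => 2 * p < L),
      (fun x => x.1 ++ x.2 ++ x.1) '' (ZC n q p ×ˢ {B | B.length = L - 2 * p}) := by
  rintro W ⟨hW, hinst⟩
  obtain ⟨P, B, hP, hB, rfl⟩ := hinst.exists_eq_append_append
  have hPlen : (Zimin n).length ≤ P.length := hP.length_le
  have hBlen : 0 < B.length := List.length_pos_iff.mpr hB
  have hz := length_zimin_add_one n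
  simp only [List.length_append] at hW
  simp only [Set.mem_iUnion, Set.mem_image, Set.mem_prod, Set.mem_ofPred_eq, mem_filter, mem_Ico,
    Prod.exists]
  exact ⟨P.length, ⟨⟨by omega, by omega⟩, by omega⟩, P, B, ⟨⟨rfl, hP⟩, by omega⟩, rfl⟩

theorem ncard_ZC_succ_le (n q L : ℕ) :
    (ZC (n + 1) q L).ncard ≤
      ∑ p ∈ (Ico (2 ^ n - 1) L).filter (fun p => 2 * p < L),
        (ZC n q p).ncard * q ^ (L - 2 * p) := by
  have hfin : ∀ p ∈ (Ico (2 ^ n - 1) L).filter (fun p => 2 * p < L),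
      (ZC n q p ×ˢ {B : List (Fin q) | B.length = L - 2 * p}).Finite :=
    fun p _ => (ZC_finite n q p).prod (List.finite_length_eq _ _)
  calc _ ≤ _ := Set.ncard_le_ncard (ZC_succ_subset n q L) (finite_biUnion_image _ _ _ hfin)
    _ ≤ _ := ncard_biUnion_image_le _ _ _ hfin
    _ = _ := sum_congr rfl fun p _ => by
        rw [Set.ncard_prod, List.ncard_length_eq, Fintype.card_fin]

noncomputable def ziminDensityBound (q : ℝ) (n : ℕ) : ℝ :=
  (q / (q - 1)) ^ (n - 1) * q ^ (-(2 ^ n : ℤ) + n + 1)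

theorem ziminDensityBound_of_le_one (q : ℝ) {n : ℕ} (hn : n ≤ 1) : ziminDensityBound q n = 1 := by
  interval_cases n <;> simp [ziminDensityBound]

theorem ziminDensityBound_succ {q : ℝ} (hq : q ≠ 0) {n : ℕ} (hn : 1 ≤ n) :
    ziminDensityBound q (n + 1) = ziminDensityBound q n * (q⁻¹ ^ (2 ^ n - 1) / (1 - q⁻¹)) := by
  have h2n : 1 ≤ 2 ^ n := Nat.one_le_two_pow
  have hA : 1 / (1 - q⁻¹) = q / (q - 1) := by
    rw [one_div, show 1 - q⁻¹ = (q - 1) / q by field_simp, inv_div]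
  have hexp : (-(2 ^ (n + 1) : ℤ) + ↑(n + 1) + 1) =
      (-(2 ^ n : ℤ) + n + 1) + -((2 ^ n - 1 : ℕ) : ℤ) := by
    push_cast [Nat.cast_sub h2n]; ring
  obtain ⟨m, rfl⟩ := Nat.exists_eq_add_of_le' hn
  rw [ziminDensityBound, ziminDensityBound, hexp, zpow_add₀ hq, zpow_neg,
    zpow_natCast, ← inv_pow, div_eq_mul_one_div _ (1 - q⁻¹), hA]
  simp only [Nat.add_sub_cancel, pow_succ]
  ring

theorem ncard_ZC_le_ziminDensityBound {q : ℕ} (hq : 2 ≤ q) (n L : ℕ) :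
    ((ZC n q L).ncard : ℝ) ≤ (q : ℝ) ^ L * ziminDensityBound q n := by
  have hq1 : (1 : ℝ) < q := by exact_mod_cast hq
  have hq0 : (q : ℝ) ≠ 0 := by positivity
  induction n generalizing L with
  | zero =>
    rw [ziminDensityBound_of_le_one _ zero_le_one, mul_one]
    exact_mod_cast ncard_ZC_le_pow 0 q L
  | succ n ih =>
    rcases Nat.eq_zero_or_pos n with rfl | hn
    · rw [ziminDensityBound_of_le_one _ le_rfl, mul_one]
      exact_mod_cast ncard_ZC_le_pow 1 q L
    set s := (Ico (2 ^ n - 1) L).filter (fun p => 2 * p < L)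
    have hterm : ∀ p ∈ s, (q : ℝ) ^ p * (q : ℝ) ^ (L - 2 * p) = (q : ℝ) ^ L * (q : ℝ)⁻¹ ^ p := by
      intro p hp
      have hpL : 2 * p < L := (mem_filter.mp hp).2
      rw [inv_pow, ← pow_sub₀ _ hq0 (by omega), ← pow_add]
      congr 1
      omega
    calc ((ZC (n + 1) q L).ncard : ℝ)
        ≤ ∑ p ∈ s, ((ZC n q p).ncard : ℝ) * (q : ℝ) ^ (L - 2 * p) := by
          exact_mod_cast ncard_ZC_succ_le n q L
      _ ≤ ∑ p ∈ s, (q : ℝ) ^ L * ziminDensityBound q n * (q : ℝ)⁻¹ ^ p := by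
          refine sum_le_sum fun p hp => ?_
          calc _ ≤ (q : ℝ) ^ p * ziminDensityBound q n * (q : ℝ) ^ (L - 2 * p) := by
                gcongr; exact ih p
            _ = _ := by rw [mul_right_comm, hterm p hp]; ring
      _ = (q : ℝ) ^ L * ziminDensityBound q n * ∑ p ∈ s, (q : ℝ)⁻¹ ^ p := by rw [mul_sum]
      _ ≤ (q : ℝ) ^ L * ziminDensityBound q n * ((q : ℝ)⁻¹ ^ (2 ^ n - 1) / (1 - (q : ℝ)⁻¹)) := by
          have hD : 0 ≤ ziminDensityBound q n := by
            unfold ziminDensityBound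
            have : (0 : ℝ) ≤ q - 1 := by linarith
            positivity
          gcongr
          calc ∑ p ∈ s, (q : ℝ)⁻¹ ^ p ≤ ∑ p ∈ Ico (2 ^ n - 1) L, (q : ℝ)⁻¹ ^ p :=
                sum_le_sum_of_subset_of_nonneg (filter_subset _ _) fun _ _ _ => by positivity
            _ ≤ _ := geom_sum_Ico_le_of_lt_one (by positivity) (inv_lt_one_of_one_lt₀ hq1)
      _ = (q : ℝ) ^ L * ziminDensityBound q (n + 1) := by
          rw [ziminDensityBound_succ hq0 hn, mul_assoc]

theorem pow_mul_ncard_ZC_mul_pow_le {q : ℕ} (hq : 2 ≤ q) (n : ℕ) {i j M : ℕ} (hij : i ≤ j)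
    (hjM : j ≤ M) :
    ((q ^ i * (ZC n q (j - i)).ncard * q ^ (M - j) : ℕ) : ℝ) ≤
      (q : ℝ) ^ M * ziminDensityBound q n :=
  calc ((q ^ i * (ZC n q (j - i)).ncard * q ^ (M - j) : ℕ) : ℝ)
      ≤ (q : ℝ) ^ i * ((q : ℝ) ^ (j - i) * ziminDensityBound q n) * (q : ℝ) ^ (M - j) := by
        push_cast
        gcongr
        exact ncard_ZC_le_ziminDensityBound hq n (j - i)
    _ = (q : ℝ) ^ (i + (j - i) + (M - j)) * ziminDensityBound q n := by ring
    _ = (q : ℝ) ^ M * ziminDensityBound q n := by rw [show i + (j - i) + (M - j) = M by omega]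

theorem zimin_subword_count_upper_general (n q M : ℕ) (hq : 2 ≤ q) :
    (({p : List (Fin q) × ℕ × ℕ |
        p.1.length = M ∧ p.2.1 < p.2.2 ∧ p.2.2 ≤ M ∧
        IsInst (Zimin n) ((p.1.drop p.2.1).take (p.2.2 - p.2.1))}.ncard : ℝ)) ≤
      (q : ℝ) ^ M * (Nat.choose (M + 1) 2 : ℝ) *
        ((q : ℝ) / ((q : ℝ) - 1)) ^ (n - 1) * (q : ℝ) ^ (-(2 ^ n : ℤ) + n + 1) := by
  have hcount := ncard_infix_occurrences_le (fun V : List (Fin q) => IsInst (Zimin n) V) M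
  rw [Fintype.card_fin] at hcount
  calc _ ≤ ∑ j ∈ range (M + 1), ∑ i ∈ range j, (q : ℝ) ^ M * ziminDensityBound q n := by
        refine (Nat.cast_le.mpr hcount).trans ?_
        simp only [Nat.cast_sum]
        gcongr with j hj i hi
        exact pow_mul_ncard_ZC_mul_pow_le hq n (mem_range.mp hi).le
          (Nat.lt_succ_iff.mp (mem_range.mp hj))
    _ = (q : ℝ) ^ M * ((M + 1).choose 2 : ℕ) * ziminDensityBound q n := by
        simp only [sum_const, card_range, nsmul_eq_mul, ← sum_mul]
        rw [← Nat.cast_sum, sum_range_id, ← Nat.choose_two_right]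
        ring
    _ = _ := by rw [ziminDensityBound]; ring

/-- The total number, over all `q`-ary words `W` of length `M`, of pairs `(i,j)` with
`0 ≤ i < j ≤ M` such that the contiguous subword of `W` from position `i` to position `j`
is an instance of `Zₙ`, is at most
`q^M · C(M+1,2) · (q/(q−1))^{n−1} · q^{−2ⁿ+n+1}`. -/
theorem zimin_subword_count_upper (n q M : ℕ) (hn : 1 ≤ n) (hq : 2 ≤ q) (hM : 1 ≤ M) :
    (({p : List (Fin q) × ℕ × ℕ |
        p.1.length = M ∧ p.2.1 < p.2.2 ∧ p.2.2 ≤ M ∧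
        IsInst (Zimin n) ((p.1.drop p.2.1).take (p.2.2 - p.2.1))}.ncard : ℝ)) ≤
      (q : ℝ) ^ M * (Nat.choose (M + 1) 2 : ℝ) *
        ((q : ℝ) / ((q : ℝ) - 1)) ^ (n - 1) * (q : ℝ) ^ (-(2 ^ n : ℤ) + n + 1) :=
  zimin_subword_count_upper_general n q M hq
end
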